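/- If y(x) is a smooth solution of the ODE E[y] = 0 on an open interval, then for any constants c1, c2, c3, c4 with c4 ≠ 0, the function ỹ(x) = c4·y(x) + c1 + c2·x + c3·x^2 is also a solution of E[ỹ] = 0. -/

import Mathlib

noncomputable def Eode (y : ℝ → ℝ) (s : Set ℝ) (x : ℝ) : ℝ :=
  10 * (iteratedDerivWithin 3 y s x) ^ 3 * iteratedDerivWithin 7 y s x
  - 70 * (iteratedDerivWithin 3 y s x) ^ 2 * iteratedDerivWithin 4 y s x *
      iteratedDerivWithin 6 y s x
  - 49 * (iteratedDerivWithin 3 y s x) ^ 2 * (iteratedDerivWithin 5 y s x) ^ 2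
  + 280 * iteratedDerivWithin 3 y s x * (iteratedDerivWithin 4 y s x) ^ 2 *
      iteratedDerivWithin 5 y s x
  - 175 * (iteratedDerivWithin 4 y s x) ^ 4

lemma quad_iter (c1 c2 c3 : ℝ) {s : Set ℝ} (hs : IsOpen s) (hs' : UniqueDiffOn ℝ s)
    {n : ℕ} (hn : 3 ≤ n) {x : ℝ} (hx : x ∈ s) :
    iteratedDerivWithin n (fun z => c1 + c2 * z + c3 * z ^ 2) s x = 0 := by
  have h1 : Set.EqOn (derivWithin (fun z => c1 + c2 * z + c3 * z ^ 2) s)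
      (fun z => c2 + 2 * c3 * z) s := by
    intro z hz
    rw [derivWithin_of_isOpen hs hz]
    have hd : HasDerivAt (fun z => c1 + c2 * z + c3 * z ^ 2) (c2 + 2 * c3 * z) z := by
      have := (((hasDerivAt_id z).const_mul c2).const_add c1).add
        ((hasDerivAt_pow 2 z).const_mul c3)
      refine this.congr_deriv ?_
      norm_num
      ring
    exact hd.deriv
  have h2 : Set.EqOn (derivWithin (fun z => c2 + 2 * c3 * z) s) (fun _ => 2 * c3) s := by
    intro z hz
    rw [derivWithin_of_isOpen hs hz]
    have hd : HasDerivAt (fun z => c2 + 2 * c3 * z) (2 * c3) z := by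
      simpa using ((hasDerivAt_id z).const_mul (2 * c3)).const_add c2
    exact hd.deriv
  have h3 : Set.EqOn (derivWithin (fun _ : ℝ => 2 * c3) s) (fun _ => (0:ℝ)) s := by
    intro z hz
    rw [derivWithin_of_isOpen hs hz]
    simp
  have H : ∀ m : ℕ, 3 ≤ m → ∀ z ∈ s,
      iteratedDerivWithin m (fun z => c1 + c2 * z + c3 * z ^ 2) s z = 0 := by
    intro m
    induction m with
    | zero => omega
    | succ m ih =>
      intro hm z hz
      rcases Nat.lt_or_ge m 3 with hm' | hm'
      · interval_cases m
        · omega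
        · omega
        · rw [iteratedDerivWithin_succ',
            iteratedDerivWithin_congr h1 hz,
            iteratedDerivWithin_succ',
            iteratedDerivWithin_congr h2 hz,
            iteratedDerivWithin_succ',
            iteratedDerivWithin_congr h3 hz]
          simp [derivWithin_const]
      · have hzero : Set.EqOn (iteratedDerivWithin m (fun z => c1 + c2 * z + c3 * z ^ 2) s)
            (fun _ => (0:ℝ)) s := fun w hw => ih hm' w hw
        rw [iteratedDerivWithin_succ,
          derivWithin_congr hzero (hzero hz), derivWithin_of_isOpen hs hz]
        simp
  exact H n hn x hx

theorem stmt4 (a b : ℝ) (hab : a < b) (y : ℝ → ℝ)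
    (hy : ContDiffOn ℝ (⊤ : ℕ∞) y (Set.Ioo a b))
    (hsol : ∀ x ∈ Set.Ioo a b, Eode y (Set.Ioo a b) x = 0)
    (c1 c2 c3 c4 : ℝ) (hc4 : c4 ≠ 0) :
    ∀ x ∈ Set.Ioo a b,
      Eode (fun x => c4 * y x + c1 + c2 * x + c3 * x ^ 2) (Set.Ioo a b) x = 0 := by
  intro x hx
  set s := Set.Ioo a b
  have hs : IsOpen s := isOpen_Ioo
  have hs' : UniqueDiffOn ℝ s := hs.uniqueDiffOn
  have key : ∀ n : ℕ, 3 ≤ n →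
      iteratedDerivWithin n (fun x => c4 * y x + c1 + c2 * x + c3 * x ^ 2) s x
        = c4 * iteratedDerivWithin n y s x := by
    intro n hn
    have hEq : (fun x => c4 * y x + c1 + c2 * x + c3 * x ^ 2)
        = (fun x => c4 * y x) + fun x => c1 + c2 * x + c3 * x ^ 2 := by
      funext z; simp; ring
    have hf : ContDiffOn ℝ n (fun x => c4 * y x) s :=
      contDiffOn_const.mul (hy.of_le (by exact_mod_cast le_top))
    have hg : ContDiffOn ℝ n (fun x : ℝ => c1 + c2 * x + c3 * x ^ 2) s :=
      (contDiffOn_const.add (contDiffOn_const.mul contDiffOn_id)).add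
        (contDiffOn_const.mul (contDiffOn_id.pow 2))
    rw [hEq, iteratedDerivWithin_add hx hs' (hf.contDiffWithinAt hx) (hg.contDiffWithinAt hx),
      quad_iter c1 c2 c3 hs hs' hn hx,
      iteratedDerivWithin_const_mul hx hs' c4 ((hy.of_le (by exact_mod_cast le_top)).contDiffWithinAt hx)]
    ring
  have e3 := key 3 (by norm_num)
  have e4 := key 4 (by norm_num)
  have e5 := key 5 (by norm_num)
  have e6 := key 6 (by norm_num)
  have e7 := key 7 (by norm_num)
  have h0 := hsol x hx
  unfold Eode at h0 ⊢
  rw [e3, e4, e5, e6, e7]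
  nlinarith [h0, sq_nonneg c4, sq_nonneg (c4^2)]
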